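/- Let Z₁, Z₂ be independent standard Gaussians and β = (β₁, β₂) with β₁² + β₂² = 1 and β₂ ≥ 0. Then P(β₁Z₁ + β₂Z₂ ≤ 0 | Z₁ ≥ 0) = (1/π)·arccos(β₁). -/

import Mathlib

/-!
In polar coordinates the standard Gaussian measure on `ℝ²` is the product of the radial law
`r e^{-r²/2} dr` on `(0, ∞)` and the uniform law on the angle `θ ∈ (-π, π)`, so a cone has
probability equal to its opening angle divided by `2π`. With `α = arccos β₁` we have
`β₁ cos θ + β₂ sin θ = cos (θ - α)`, so `{z₀ ≥ 0, β₁ z₀ + β₂ z₁ ≤ 0}` is, up to a null set of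
angles, the cone `θ ∈ [-π/2, α - π/2]` of opening `α`, while `{z₀ ≥ 0}` is the case `α = π`.
-/

open MeasureTheory ProbabilityTheory Real

noncomputable def stdGauss (d : ℕ) : Measure (Fin d → ℝ) :=
  Measure.pi fun _ => gaussianReal 0 1

open Set

theorem integral_Ioi_mul_exp_neg_mul_sq {b : ℝ} (hb : 0 < b) :
    ∫ r in Ioi (0 : ℝ), r * exp (-b * r ^ 2) = (2 * b)⁻¹ := by
  apply Complex.ofReal_injective
  rw [← integral_complex_ofReal]
  push_cast
  exact integral_mul_cexp_neg_mul_sq (by simpa using hb)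

lemma gaussianPDFReal_mul_gaussianPDFReal (x y : ℝ) :
    gaussianPDFReal 0 1 x * gaussianPDFReal 0 1 y = (2 * π)⁻¹ * exp (-(x ^ 2 + y ^ 2) / 2) := by
  simp only [gaussianPDFReal, NNReal.coe_one, mul_one, sub_zero]
  rw [mul_mul_mul_comm, ← mul_inv, mul_self_sqrt (by positivity), ← exp_add]
  ring_nf

lemma gaussianReal_prod_apply {S : Set (ℝ × ℝ)} (hS : MeasurableSet S) :
    (gaussianReal 0 1).prod (gaussianReal 0 1) S =
      ENNReal.ofReal (∫ p in S, gaussianPDFReal 0 1 p.1 * gaussianPDFReal 0 1 p.2) := by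
  rw [gaussianReal_of_var_ne_zero _ one_ne_zero,
    prod_withDensity (measurable_gaussianPDF 0 1) (measurable_gaussianPDF 0 1),
    withDensity_apply _ hS, ← Measure.volume_eq_prod,
    ofReal_integral_eq_lintegral_ofReal]
  · simp only [gaussianPDF, ENNReal.ofReal_mul (gaussianPDFReal_nonneg _ _ _)]
  · exact ((integrable_gaussianPDFReal 0 1).mul_prod (integrable_gaussianPDFReal 0 1)).integrableOn
  · exact ae_of_all _ fun p =>
      mul_nonneg (gaussianPDFReal_nonneg _ _ _) (gaussianPDFReal_nonneg _ _ _)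

lemma stdGauss_two_apply (s : Set (Fin 2 → ℝ)) :
    stdGauss 2 s =
      (gaussianReal 0 1).prod (gaussianReal 0 1) (MeasurableEquiv.finTwoArrow.symm ⁻¹' s) := by
  rw [stdGauss, ← (measurePreserving_finTwoArrow (gaussianReal 0 1)).symm.map_eq,
    MeasurableEquiv.map_apply]

lemma setIntegral_gaussianPDFReal_mul_of_cone {S : Set (ℝ × ℝ)} (hS : MeasurableSet S)
    (hcone : ∀ r : ℝ, 0 < r → ∀ p : ℝ × ℝ, r • p ∈ S ↔ p ∈ S) :
    ∫ p in S, gaussianPDFReal 0 1 p.1 * gaussianPDFReal 0 1 p.2 =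
      (2 * π)⁻¹ * volume.real {θ ∈ Ioo (-π) π | (cos θ, sin θ) ∈ S} := by
  set Θ : Set ℝ := {θ | (cos θ, sin θ) ∈ S}
  have hΘ : MeasurableSet Θ := hS.preimage (by fun_prop)
  have hpolar : ∀ p ∈ polarCoord.target,
      p.1 • S.indicator (fun q => gaussianPDFReal 0 1 q.1 * gaussianPDFReal 0 1 q.2)
          (polarCoord.symm p) =
        p.1 * exp (-2⁻¹ * p.1 ^ 2) * ((2 * π)⁻¹ * Θ.indicator 1 p.2) := by
    rintro ⟨r, θ⟩ ⟨hr, -⟩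
    have hmem : polarCoord.symm (r, θ) ∈ S ↔ θ ∈ Θ := by
      rw [polarCoord_symm_apply]
      exact hcone r hr (cos θ, sin θ)
    by_cases hθ : θ ∈ Θ
    · rw [indicator_of_mem (hmem.2 hθ), indicator_of_mem hθ, polarCoord_symm_apply,
        gaussianPDFReal_mul_gaussianPDFReal, smul_eq_mul, Pi.one_apply]
      have : (r * cos θ) ^ 2 + (r * sin θ) ^ 2 = r ^ 2 := by
        linear_combination r ^ 2 * sin_sq_add_cos_sq θ
      rw [this]
      ring_nf
    · rw [indicator_of_notMem (mt hmem.1 hθ), indicator_of_notMem hθ]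
      simp
  calc ∫ p in S, gaussianPDFReal 0 1 p.1 * gaussianPDFReal 0 1 p.2
      = ∫ p in polarCoord.target,
          p.1 * exp (-2⁻¹ * p.1 ^ 2) * ((2 * π)⁻¹ * Θ.indicator 1 p.2) := by
        rw [← integral_indicator hS, ← integral_comp_polarCoord_symm]
        exact setIntegral_congr_fun polarCoord.open_target.measurableSet hpolar
    _ = (∫ r in Ioi (0 : ℝ), r * exp (-2⁻¹ * r ^ 2)) *
          ∫ θ in Ioo (-π) π, (2 * π)⁻¹ * Θ.indicator 1 θ := by
        rw [polarCoord_target, Measure.volume_eq_prod]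
        exact setIntegral_prod_mul (fun r => r * exp (-2⁻¹ * r ^ 2))
          (fun θ => (2 * π)⁻¹ * Θ.indicator 1 θ) _ _
    _ = (2 * π)⁻¹ * volume.real {θ ∈ Ioo (-π) π | (cos θ, sin θ) ∈ S} := by
        rw [integral_Ioi_mul_exp_neg_mul_sq (by norm_num), integral_const_mul,
          setIntegral_indicator hΘ, Pi.one_def, setIntegral_const, smul_eq_mul, mul_one,
          mul_inv_cancel₀ two_ne_zero, inv_one, one_mul]
        rfl

lemma volume_cos_nonneg_cos_sub_nonpos {α : ℝ} (hα₀ : 0 ≤ α) (hαπ : α ≤ π) :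
    volume {θ ∈ Ioo (-π) π | 0 ≤ cos θ ∧ cos (θ - α) ≤ 0} = ENNReal.ofReal α := by
  have hπ := pi_pos
  have hIcc : volume (Icc (-(π / 2)) (α - π / 2)) = ENNReal.ofReal α := by
    rw [volume_Icc]
    ring_nf
  have hlower :
      Icc (-(π / 2)) (α - π / 2) ⊆ {θ ∈ Ioo (-π) π | 0 ≤ cos θ ∧ cos (θ - α) ≤ 0} := by
    rintro θ ⟨hl, hu⟩
    refine ⟨⟨by linarith, by linarith⟩, cos_nonneg_of_neg_pi_div_two_le_of_le hl (by linarith), ?_⟩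
    rw [← cos_neg, neg_sub]
    exact cos_nonpos_of_pi_div_two_le_of_le (by linarith) (by linarith)
  -- the extra point `π / 2` belongs to the set when `α = 0`
  have hupper : {θ ∈ Ioo (-π) π | 0 ≤ cos θ ∧ cos (θ - α) ≤ 0} ⊆
      Icc (-(π / 2)) (α - π / 2) ∪ {π / 2} := by
    rintro θ ⟨⟨hl, hu⟩, hcos, hcos_sub⟩
    have h₁ : -(π / 2) ≤ θ := by
      by_contra! h
      have := cos_neg_of_pi_div_two_lt_of_lt (x := -θ) (by linarith) (by linarith)
      rw [cos_neg] at this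
      linarith
    have h₂ : θ ≤ π / 2 := by
      by_contra! h
      linarith [cos_neg_of_pi_div_two_lt_of_lt h (by linarith)]
    rcases h₂.eq_or_lt with h₂ | h₂
    · exact Or.inr h₂
    refine Or.inl ⟨h₁, ?_⟩
    by_contra! h
    linarith [cos_pos_of_mem_Ioo (x := θ - α) ⟨by linarith, by linarith⟩]
  refine le_antisymm ?_ (hIcc ▸ measure_mono hlower)
  calc volume {θ ∈ Ioo (-π) π | 0 ≤ cos θ ∧ cos (θ - α) ≤ 0}
      ≤ volume (Icc (-(π / 2)) (α - π / 2) ∪ {π / 2}) := measure_mono hupper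
    _ ≤ volume (Icc (-(π / 2)) (α - π / 2)) + volume {π / 2} := measure_union_le _ _
    _ = ENNReal.ofReal α := by rw [hIcc, measure_singleton, add_zero]

lemma gaussianReal_prod_apply_wedge {β₁ β₂ : ℝ} (h : β₁ ^ 2 + β₂ ^ 2 = 1) (hβ₂ : 0 ≤ β₂) :
    (gaussianReal 0 1).prod (gaussianReal 0 1) {p | 0 ≤ p.1 ∧ β₁ * p.1 + β₂ * p.2 ≤ 0} =
      ENNReal.ofReal (arccos β₁ / (2 * π)) := by
  have hdot : ∀ θ, β₁ * cos θ + β₂ * sin θ = cos (θ - arccos β₁) := by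
    intro θ
    rw [cos_sub, cos_arccos (by nlinarith) (by nlinarith), sin_arccos,
      show 1 - β₁ ^ 2 = β₂ ^ 2 by linarith, sqrt_sq hβ₂]
    ring
  set S : Set (ℝ × ℝ) := {p | 0 ≤ p.1 ∧ β₁ * p.1 + β₂ * p.2 ≤ 0}
  have hS : MeasurableSet S :=
    (measurableSet_le measurable_const measurable_fst).inter
      (measurableSet_le (f := fun p : ℝ × ℝ => β₁ * p.1 + β₂ * p.2) (by fun_prop)
        measurable_const)
  have hcone : ∀ r : ℝ, 0 < r → ∀ p : ℝ × ℝ, r • p ∈ S ↔ p ∈ S := by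
    intro r hr p
    simp only [S, mem_ofPred_eq, Prod.smul_fst, Prod.smul_snd]
    rw [show β₁ * r • p.1 + β₂ * r • p.2 = r • (β₁ * p.1 + β₂ * p.2) by
        simp only [smul_eq_mul]; ring,
      smul_nonneg_iff_nonneg_of_pos_left hr, smul_nonpos_iff_nonpos_of_pos_left hr]
  rw [gaussianReal_prod_apply hS, setIntegral_gaussianPDFReal_mul_of_cone hS hcone]
  simp only [S, mem_ofPred_eq, hdot]
  rw [measureReal_def, volume_cos_nonneg_cos_sub_nonpos (arccos_nonneg _) (arccos_le_pi _),
    ENNReal.toReal_ofReal (arccos_nonneg _)]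
  ring_nf

theorem stmt5 (β₁ β₂ : ℝ) (h : β₁^2 + β₂^2 = 1) (hβ₂ : 0 ≤ β₂) :
    (((stdGauss 2)[|{z | 0 ≤ z 0}]) {z | β₁ * z 0 + β₂ * z 1 ≤ 0}).toReal
      = (1/π) * Real.arccos β₁ := by
  have hA : MeasurableEquiv.finTwoArrow.symm ⁻¹' {z : Fin 2 → ℝ | 0 ≤ z 0} =
      {p : ℝ × ℝ | 0 ≤ p.1 ∧ -1 * p.1 + 0 * p.2 ≤ 0} := by
    ext p
    simp
  have hAB : MeasurableEquiv.finTwoArrow.symm ⁻¹'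
      ({z : Fin 2 → ℝ | 0 ≤ z 0} ∩ {z | β₁ * z 0 + β₂ * z 1 ≤ 0}) =
      {p : ℝ × ℝ | 0 ≤ p.1 ∧ β₁ * p.1 + β₂ * p.2 ≤ 0} := by
    ext p
    simp
  rw [cond_apply (measurableSet_le measurable_const (measurable_pi_apply 0)),
    stdGauss_two_apply, stdGauss_two_apply, hA, hAB,
    gaussianReal_prod_apply_wedge (by norm_num) le_rfl, gaussianReal_prod_apply_wedge h hβ₂,
    arccos_neg_one,
    ENNReal.toReal_mul, ENNReal.toReal_inv, ENNReal.toReal_ofReal (by positivity),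
    ENNReal.toReal_ofReal (div_nonneg (arccos_nonneg _) (by positivity))]
  field_simp
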